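/- π/8 = ∑_{n=0}^∞ ((−1)^n/(2n+1)) · C_{2n+1} / (3 + √10)^{2n+1}, where the series on the right converges. -/

import Mathlib

/-- Lucas-balancing polynomials: `C 0 x = 1`, `C 1 x = 3x`,
`C (n+2) x = 6 x C (n+1) x - C n x`; the Lucas-balancing numbers are `C n 1`. -/
def lucasBalancing (x : ℝ) : ℕ → ℝ
  | 0 => 1
  | 1 => 3 * x
  | n + 2 => 6 * x * lucasBalancing x (n + 1) - lucasBalancing x n

lemma lucasBalancing_closed (n : ℕ) :
    lucasBalancing 1 n = ((3 + 2 * Real.sqrt 2) ^ n + (3 - 2 * Real.sqrt 2) ^ n) / 2 := by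
  have h2 : Real.sqrt 2 ^ 2 = 2 := Real.sq_sqrt (by norm_num)
  induction n using Nat.strong_induction_on with
  | _ n ih =>
    match n with
    | 0 => simp [lucasBalancing]
    | 1 => simp [lucasBalancing]
    | (m + 2) =>
      have hp : (3 + 2*Real.sqrt 2) ^ (m+2)
          = 6 * (3 + 2*Real.sqrt 2) ^ (m+1) - (3 + 2*Real.sqrt 2) ^ m := by
        have e : (3 + 2*Real.sqrt 2) ^ 2 = 6 * (3 + 2*Real.sqrt 2) - 1 := by nlinarith
        calc (3 + 2*Real.sqrt 2) ^ (m+2) = (3 + 2*Real.sqrt 2) ^ m * (3 + 2*Real.sqrt 2) ^ 2 := by ring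
          _ = (3 + 2*Real.sqrt 2) ^ m * (6 * (3 + 2*Real.sqrt 2) - 1) := by rw [e]
          _ = 6 * (3 + 2*Real.sqrt 2) ^ (m+1) - (3 + 2*Real.sqrt 2) ^ m := by ring
      have hq : (3 - 2*Real.sqrt 2) ^ (m+2)
          = 6 * (3 - 2*Real.sqrt 2) ^ (m+1) - (3 - 2*Real.sqrt 2) ^ m := by
        have e : (3 - 2*Real.sqrt 2) ^ 2 = 6 * (3 - 2*Real.sqrt 2) - 1 := by nlinarith
        calc (3 - 2*Real.sqrt 2) ^ (m+2) = (3 - 2*Real.sqrt 2) ^ m * (3 - 2*Real.sqrt 2) ^ 2 := by ring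
          _ = (3 - 2*Real.sqrt 2) ^ m * (6 * (3 - 2*Real.sqrt 2) - 1) := by rw [e]
          _ = 6 * (3 - 2*Real.sqrt 2) ^ (m+1) - (3 - 2*Real.sqrt 2) ^ m := by ring
      rw [lucasBalancing, ih (m+1) (by omega), ih m (by omega), hp, hq]
      ring

theorem pi_div_eight_lucasBalancing_series :
    HasSum
      (fun n : ℕ => (-1 : ℝ) ^ n / (2 * (n : ℝ) + 1) *
        (lucasBalancing 1 (2 * n + 1) / (3 + Real.sqrt 10) ^ (2 * n + 1)))
      (Real.pi / 8) := by
  have h2 : Real.sqrt 2 ^ 2 = 2 := Real.sq_sqrt (by norm_num)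
  have h2pos : (1 : ℝ) < Real.sqrt 2 := by nlinarith [Real.sqrt_nonneg 2]
  have h2lt : Real.sqrt 2 < 1.5 := by nlinarith [Real.sqrt_nonneg 2]
  have h10 : Real.sqrt 10 ^ 2 = 10 := Real.sq_sqrt (by norm_num)
  have h10gt : (3 : ℝ) < Real.sqrt 10 := by nlinarith [Real.sqrt_nonneg 10]
  have h10lt : Real.sqrt 10 < 3.2 := by nlinarith [Real.sqrt_nonneg 10]
  set d : ℝ := 3 + Real.sqrt 10 with hd
  have hdpos : (0 : ℝ) < d := by positivity
  set a : ℝ := (3 + 2 * Real.sqrt 2) / d with ha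
  set b : ℝ := (3 - 2 * Real.sqrt 2) / d with hb
  have ha0 : 0 < a := by
    apply div_pos _ hdpos; nlinarith
  have hb0 : 0 < b := by
    apply div_pos _ hdpos; nlinarith
  have ha1 : a < 1 := by
    rw [ha, div_lt_one hdpos]; nlinarith
  have hb1 : b < 1 := by
    rw [hb, div_lt_one hdpos]; nlinarith
  have hsa := Real.hasSum_arctan (x := a) (by rw [Real.norm_eq_abs, abs_of_pos ha0]; exact ha1)
  have hsb := Real.hasSum_arctan (x := b) (by rw [Real.norm_eq_abs, abs_of_pos hb0]; exact hb1)
  have hsum := (hsa.add hsb).div_const 2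
  have hdne : d ≠ 0 := ne_of_gt hdpos
  have hab1 : a * b = 1 / d ^ 2 := by
    rw [ha, hb, div_mul_div_comm]
    congr 1
    · nlinarith
    · ring
  have habsum : a + b = 6 / d := by
    rw [ha, hb, ← add_div]
    congr 1; ring
  have hd2 : d ^ 2 = 6 * d + 1 := by rw [hd]; nlinarith
  have harctan : Real.arctan a + Real.arctan b = Real.pi / 4 := by
    have hab : a * b < 1 := by
      rw [hab1, div_lt_one (by positivity)]; nlinarith
    rw [Real.arctan_add hab]
    have h1ab : 1 - a * b = 6 / d := by
      rw [hab1, eq_div_iff hdne]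
      field_simp
      nlinarith
    have : (a + b) / (1 - a * b) = 1 := by
      rw [habsum, h1ab, div_self (by positivity)]
    rw [this, Real.arctan_one]
  rw [harctan] at hsum
  have : Real.pi / 4 / 2 = Real.pi / 8 := by ring
  rw [this] at hsum
  convert hsum using 2 with n
  on_goal 1 => rfl
  rw [lucasBalancing_closed]
  have hdn : d ^ (2 * n + 1) ≠ 0 := by positivity
  rw [ha, hb, div_pow, div_pow]
  push_cast
  field_simp
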